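/- Let U ∈ ℝ^{m×r} and V ∈ ℝ^{n×r} have orthonormal columns, let Y ∈ ℝ^{m×n}, and suppose (I − U Uᵀ) Y V = Q R and (I − V Vᵀ) Yᵀ U = Q̂ R̂ are QR decompositions with Q ∈ ℝ^{m×r}, Q̂ ∈ ℝ^{n×r} having orthonormal columns and R, R̂ ∈ ℝ^{r×r} upper triangular. Then the tangent-space projection P(Y) = U Uᵀ Y + Y V Vᵀ − U Uᵀ Y V Vᵀ admits the factorization P(Y) = [U Q] · M · [V Q̂]ᵀ, where M is the 2r×2r block matrix with blocks M₁₁ = Uᵀ Y V, M₁₂ = R̂ᵀ, M₂₁ = R, M₂₂ = 0. -/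

import Mathlib

/-!
Split `P(Y)` along `UUᵀ` and `VVᵀ`: it is `U(UᵀYV)Vᵀ + UUᵀY(I − VVᵀ) + (I − UUᵀ)YVVᵀ`.
The last two terms are `U((I − VVᵀ)YᵀU)ᵀ = U R̂ᵀ Q̂ᵀ` and `((I − UUᵀ)YV)Vᵀ = Q R Vᵀ`, which are exactly
the off-diagonal blocks of `[U Q] M [V Q̂]ᵀ`.
-/

open Matrix

namespace Matrix

variable {α : Type*} [CommRing α] {l p q s t u : Type*}
  [Fintype p] [Fintype q] [Fintype s] [Fintype t]

theorem fromCols_mul_fromBlocks_zero_mul_transpose_fromCols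
    (A : Matrix l p α) (B : Matrix l q α) (C : Matrix u s α) (D : Matrix u t α)
    (M : Matrix p s α) (N : Matrix p t α) (P : Matrix q s α) :
    fromCols A B * fromBlocks M N P 0 * (fromCols C D)ᵀ
      = A * M * Cᵀ + A * N * Dᵀ + B * P * Cᵀ := by
  rw [fromCols_mul_fromBlocks, transpose_fromCols, fromCols_mul_fromRows, Matrix.mul_zero,
    add_zero, Matrix.add_mul]
  abel

variable {m n : Type*} [Fintype m] [Fintype n] [DecidableEq m] [DecidableEq n]

theorem tangent_projection_eq_sum (U : Matrix m s α) (V : Matrix n s α) (Y : Matrix m n α) :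
    U * Uᵀ * Y + Y * (V * Vᵀ) - U * Uᵀ * Y * (V * Vᵀ)
      = U * (Uᵀ * Y * V) * Vᵀ + U * ((1 - V * Vᵀ) * Yᵀ * U)ᵀ + (1 - U * Uᵀ) * Y * V * Vᵀ := by
  simp only [transpose_mul, transpose_sub, transpose_transpose, Matrix.mul_sub,
    Matrix.sub_mul, Matrix.one_mul, Matrix.mul_assoc]
  abel

end Matrix

theorem stmt6_general (m n r : ℕ)
    (U Q : Matrix (Fin m) (Fin r) ℝ) (V Qh : Matrix (Fin n) (Fin r) ℝ)
    (R Rh : Matrix (Fin r) (Fin r) ℝ) (Y : Matrix (Fin m) (Fin n) ℝ)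
    (hQR : (1 - U * Uᵀ) * Y * V = Q * R)
    (hQRh : (1 - V * Vᵀ) * Yᵀ * U = Qh * Rh) :
    U * Uᵀ * Y + Y * (V * Vᵀ) - U * Uᵀ * Y * (V * Vᵀ)
      = Matrix.fromCols U Q
          * Matrix.fromBlocks (Uᵀ * Y * V) Rhᵀ R 0
          * (Matrix.fromCols V Qh)ᵀ := by
  rw [fromCols_mul_fromBlocks_zero_mul_transpose_fromCols, tangent_projection_eq_sum, hQR, hQRh,
    transpose_mul, Matrix.mul_assoc U Rhᵀ]

/-- factorization of the tangent-space projection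
P(Y) = [U Q] · M · [V Q̂]ᵀ with M the 2r×2r block matrix
[[UᵀYV, R̂ᵀ], [R, 0]] coming from the QR decompositions of
(I−UUᵀ)YV and (I−VVᵀ)YᵀU. -/
theorem stmt6 (m n r : ℕ)
    (U Q : Matrix (Fin m) (Fin r) ℝ) (V Qh : Matrix (Fin n) (Fin r) ℝ)
    (R Rh : Matrix (Fin r) (Fin r) ℝ) (Y : Matrix (Fin m) (Fin n) ℝ)
    (hU : Uᵀ * U = 1) (hV : Vᵀ * V = 1)
    (hQ : Qᵀ * Q = 1) (hQh : Qhᵀ * Qh = 1)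
    (hUQ : Uᵀ * Q = 0) (hVQh : Vᵀ * Qh = 0)
    (hQR : (1 - U * Uᵀ) * Y * V = Q * R)
    (hQRh : (1 - V * Vᵀ) * Yᵀ * U = Qh * Rh)
    (hRtri : ∀ i j : Fin r, j < i → R i j = 0)
    (hRhtri : ∀ i j : Fin r, j < i → Rh i j = 0) :
    U * Uᵀ * Y + Y * (V * Vᵀ) - U * Uᵀ * Y * (V * Vᵀ)
      = Matrix.fromCols U Q
          * Matrix.fromBlocks (Uᵀ * Y * V) Rhᵀ R 0
          * (Matrix.fromCols V Qh)ᵀ :=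
  stmt6_general m n r U Q V Qh R Rh Y hQR hQRh
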